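/- arXiv:1008.3572 — 2 statements merged into one kernel-verified Lean document; each statement's English description precedes it below -/
import Mathlib

section
/- Boundary Lemma: assume the nondegeneracy condition. Let σ be a nonempty finite family of sets, each of the form V(u) ∩ Π_p or V(u) ∩ Π_q for some u ∈ U, let τ ⊆ σ be a nonempty subfamily, and write W_σ and W_τ for the intersections of the members of σ and of τ respectively. If W_σ ∩ U_α ∩ B_r(p) ≠ ∅, W_σ ∩ U_α ∩ B_r(p) ∩ B_r(q) = ∅, and W_τ ∩ U_α ∩ B_r(p) ∩ B_r(q) ≠ ∅, then W_τ ∩ Z_0(α) ≠ ∅. (In the nerve terminology of the paper: if σ ∈ L, σ ∉ K, and the face τ of σ lies in K, then τ lies in K_0.) -/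
open Metric Set

noncomputable section

/-- The distance function to a finite point set `U`. -/
def distU {k : ℕ} (U : Finset (EuclideanSpace ℝ (Fin k))) (x : EuclideanSpace ℝ (Fin k)) : ℝ :=
  Metric.infDist x (U : Set (EuclideanSpace ℝ (Fin k)))

/-- The α-offset `U_α` of a finite point set `U`. -/
def offsetU {k : ℕ} (U : Finset (EuclideanSpace ℝ (Fin k))) (α : ℝ) :
    Set (EuclideanSpace ℝ (Fin k)) :=
  {x | distU U x ≤ α}

/-- The power cell of the ball `B_r(p)` at level `α`. -/
def pcell {k : ℕ} (U : Finset (EuclideanSpace ℝ (Fin k))) (p : EuclideanSpace ℝ (Fin k))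
    (r α : ℝ) : Set (EuclideanSpace ℝ (Fin k)) :=
  {x | ∀ u ∈ U, dist x p ^ 2 - r ^ 2 ≤ dist x u ^ 2 - α ^ 2}

/-- `Z_0(α) = (B_r(p) ∩ B_r(q)) \ int (P(α) ∩ Q(α))`. -/
def Z0 {k : ℕ} (U : Finset (EuclideanSpace ℝ (Fin k))) (p q : EuclideanSpace ℝ (Fin k))
    (r α : ℝ) : Set (EuclideanSpace ℝ (Fin k)) :=
  (closedBall p r ∩ closedBall q r) \ interior (pcell U p r α ∩ pcell U q r α)

/-- The Voronoi cell of a point `u` with respect to the point set `U`. -/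
def vcell {k : ℕ} (U : Finset (EuclideanSpace ℝ (Fin k))) (u : EuclideanSpace ℝ (Fin k)) :
    Set (EuclideanSpace ℝ (Fin k)) :=
  {x | ∀ u' ∈ U, dist x u ≤ dist x u'}

/-- The closed half-space of points at least as close to `p` as to `q`. -/
def halfSpace {k : ℕ} (p q : EuclideanSpace ℝ (Fin k)) : Set (EuclideanSpace ℝ (Fin k)) :=
  {x | dist x p ≤ dist x q}

/-!
Take `x ∈ W_τ ∩ U_α ∩ B_r(p) ∩ B_r(q)` and `y ∈ W_σ ∩ U_α ∩ B_r(p)`; then `y ∉ B_r(q)`. All the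
sets involved are convex, so the segment `[x, y]` lies in `W_τ ∩ B_r(p)`, and also in the ball
`B_α(u)` around the Voronoi site `u` of any member of `τ`. On `B_α(u)` the power cell `Q(α)` is
contained in `B_r(q)`, so along the segment the interior of `Z(α)` never leaves `B_r(q)`. Since the
segment is connected and leaves `B_r(q)`, the closed set `B_r(q)` cannot coincide with the open set
`int Z(α)` on it: some point of the segment lies in `B_r(q) \ int Z(α)`, i.e. in `Z_0(α)`.
-/

theorem IsPreconnected.inter_diff_nonempty_of_inter_subset {X : Type*} [TopologicalSpace X]
    {S A O : Set X} (hS : IsPreconnected S) (hA : IsClosed A) (hO : IsOpen O) (hOA : S ∩ O ⊆ A)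
    (hSA : (S ∩ A).Nonempty) (hSnA : ¬S ⊆ A) : ((S ∩ A) \ O).Nonempty := by
  by_contra! hempty
  have hcover : S ⊆ O ∪ Aᶜ := fun z hz => by
    by_cases hzA : z ∈ A
    · exact Or.inl (by_contra fun hzO => hempty.subset ⟨⟨hz, hzA⟩, hzO⟩)
    · exact Or.inr hzA
  have hdisj : S ∩ (O ∩ Aᶜ) = ∅ :=
    eq_empty_of_forall_notMem fun z ⟨hz, hzO, hzA⟩ => hzA (hOA ⟨hz, hzO⟩)
  rcases isPreconnected_iff_subset_of_disjoint.mp hS O Aᶜ hO hA.isOpen_compl hcover hdisj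
    with hSO | hSAc
  · exact hSnA fun z hz => hOA ⟨hz, hSO hz⟩
  · obtain ⟨z, hzS, hzA⟩ := hSA
    exact hSAc hzS hzA

theorem convex_setOf_dist_le_dist {E : Type*} [NormedAddCommGroup E] [InnerProductSpace ℝ E]
    (a b : E) : Convex ℝ {x : E | dist x a ≤ dist x b} := by
  have hset : {x : E | dist x a ≤ dist x b}
      = {x | inner ℝ (b - a) x ≤ (‖b‖ ^ 2 - ‖a‖ ^ 2) / 2} := by
    ext x
    rw [mem_ofPred_eq, mem_ofPred_eq, ← sq_le_sq₀ dist_nonneg dist_nonneg, dist_eq_norm,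
      dist_eq_norm, norm_sub_sq_real, norm_sub_sq_real, inner_sub_left, real_inner_comm a,
      real_inner_comm b]
    constructor <;> intro h <;> linarith
  rw [hset]
  exact convex_halfSpace_le (innerₗ E (b - a)).isLinear _

section

variable {k : ℕ} {U : Finset (EuclideanSpace ℝ (Fin k))}

theorem convex_vcell (u : EuclideanSpace ℝ (Fin k)) : Convex ℝ (vcell U u) := by
  simpa only [vcell, ofPred_forall] using
    convex_iInter₂ fun u' (_ : u' ∈ U) => convex_setOf_dist_le_dist u u'

theorem convex_halfSpace (p q : EuclideanSpace ℝ (Fin k)) : Convex ℝ (halfSpace p q) :=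
  convex_setOf_dist_le_dist p q

theorem dist_le_of_mem_vcell_of_mem_offsetU (hU : U.Nonempty) {u x : EuclideanSpace ℝ (Fin k)}
    {α : ℝ} (hx : x ∈ vcell U u) (hxα : x ∈ offsetU U α) : dist x u ≤ α := by
  obtain ⟨u', hu'U, hu'⟩ :=
    U.finite_toSet.isCompact.exists_infDist_eq_dist (Finset.coe_nonempty.mpr hU) x
  calc dist x u ≤ dist x u' := hx u' hu'U
    _ = distU U x := hu'.symm
    _ ≤ α := hxα

theorem mem_closedBall_of_mem_pcell {q u x : EuclideanSpace ℝ (Fin k)} {r α : ℝ} (hr : 0 ≤ r)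
    (hx : x ∈ pcell U q r α) (hu : u ∈ U) (hxu : dist x u ≤ α) : x ∈ closedBall q r := by
  have hpow := hx u hu
  rw [mem_closedBall, ← sq_le_sq₀ dist_nonneg hr]
  nlinarith [dist_nonneg (x := x) (y := u)]

end

theorem stmt5_general {k : ℕ} (U : Finset (EuclideanSpace ℝ (Fin k))) (hU : U.Nonempty)
    (p q : EuclideanSpace ℝ (Fin k)) (r : ℝ) (α : ℝ)
    (σ τ : Set (Set (EuclideanSpace ℝ (Fin k))))
    (hform : ∀ s ∈ σ, ∃ u ∈ U, s = vcell U u ∩ halfSpace p q ∨ s = vcell U u ∩ halfSpace q p)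
    (hτσ : τ ⊆ σ) (hτne : τ.Nonempty)
    (hσL : (⋂₀ σ ∩ offsetU U α ∩ closedBall p r).Nonempty)
    (hσK : ⋂₀ σ ∩ offsetU U α ∩ closedBall p r ∩ closedBall q r = ∅)
    (hτK : (⋂₀ τ ∩ offsetU U α ∩ closedBall p r ∩ closedBall q r).Nonempty) :
    (⋂₀ τ ∩ Z0 U p q r α).Nonempty := by
  obtain ⟨x, ⟨⟨hxτ, hxα⟩, hxp⟩, hxq⟩ := hτK
  obtain ⟨y, ⟨hyσ, hyα⟩, hyp⟩ := hσL
  have hyq : y ∉ closedBall q r := fun hyq => hσK.subset ⟨⟨⟨hyσ, hyα⟩, hyp⟩, hyq⟩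
  have hyτ : y ∈ ⋂₀ τ := fun s hs => hyσ s (hτσ hs)
  obtain ⟨s, hsτ⟩ := hτne
  obtain ⟨u, huU, hs⟩ := hform s (hτσ hsτ)
  have hcell : s ⊆ vcell U u := by rcases hs with rfl | rfl <;> exact inter_subset_left
  have hconvτ : Convex ℝ (⋂₀ τ) := convex_sInter fun t ht => by
    obtain ⟨v, -, rfl | rfl⟩ := hform t (hτσ ht)
    exacts [(convex_vcell v).inter (convex_halfSpace p q),
      (convex_vcell v).inter (convex_halfSpace q p)]
  have hxu := dist_le_of_mem_vcell_of_mem_offsetU hU (hcell (hxτ s hsτ)) hxα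
  have hyu := dist_le_of_mem_vcell_of_mem_offsetU hU (hcell (hyτ s hsτ)) hyα
  have hseg_ball : segment ℝ x y ⊆ closedBall u α :=
    (convex_closedBall u α).segment_subset (mem_closedBall.mpr hxu) (mem_closedBall.mpr hyu)
  have hint : segment ℝ x y ∩ interior (pcell U p r α ∩ pcell U q r α) ⊆ closedBall q r :=
    fun z ⟨hz, hzZ⟩ => mem_closedBall_of_mem_pcell (nonempty_closedBall.mp ⟨x, hxq⟩)
      (interior_subset hzZ).2 huU (hseg_ball hz)
  obtain ⟨z, ⟨hzseg, hzq⟩, hzZ⟩ := (convex_segment x y).isPreconnected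
    |>.inter_diff_nonempty_of_inter_subset isClosed_closedBall isOpen_interior hint
      ⟨x, left_mem_segment ℝ x y, hxq⟩ fun h => hyq (h (right_mem_segment ℝ x y))
  exact ⟨z, hconvτ.segment_subset hxτ hyτ hzseg,
    ⟨(convex_closedBall p r).segment_subset hxp hyp hzseg, hzq⟩, hzZ⟩

/-- Boundary Lemma: let `σ` be a nonempty finite family of sets, each of the
form `V(u) ∩ Π_p` or `V(u) ∩ Π_q` for some `u ∈ U`, and let `τ ⊆ σ` be nonempty.  If
`W_σ ∩ U_α ∩ B_r(p) ≠ ∅`, `W_σ ∩ U_α ∩ B_r(p) ∩ B_r(q) = ∅`, and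
`W_τ ∩ U_α ∩ B_r(p) ∩ B_r(q) ≠ ∅`, then `W_τ ∩ Z_0(α) ≠ ∅`. -/
theorem stmt5 {k : ℕ} (U : Finset (EuclideanSpace ℝ (Fin k))) (hU : U.Nonempty)
    (p q : EuclideanSpace ℝ (Fin k)) (r : ℝ) (hr : 0 < r) (α : ℝ) (hα : 0 ≤ α)
    (hndp : p ∈ U → α < r) (hndq : q ∈ U → α < r)
    (σ τ : Set (Set (EuclideanSpace ℝ (Fin k)))) (hσfin : σ.Finite) (hσne : σ.Nonempty)
    (hform : ∀ s ∈ σ, ∃ u ∈ U, s = vcell U u ∩ halfSpace p q ∨ s = vcell U u ∩ halfSpace q p)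
    (hτσ : τ ⊆ σ) (hτne : τ.Nonempty)
    (hσL : (⋂₀ σ ∩ offsetU U α ∩ closedBall p r).Nonempty)
    (hσK : ⋂₀ σ ∩ offsetU U α ∩ closedBall p r ∩ closedBall q r = ∅)
    (hτK : (⋂₀ τ ∩ offsetU U α ∩ closedBall p r ∩ closedBall q r).Nonempty) :
    (⋂₀ τ ∩ Z0 U p q r α).Nonempty :=
  stmt5_general U hU p q r α σ τ hform hτσ hτne hσL hσK hτK
end
end

section
/- Interior characterization of the power cell: assume that if p ∈ U then α < r. Then the interior of the power cell P(α) is exactly the set {x ∈ ℝ^k : ‖x − p‖² − r² < ‖x − u‖² − α² for all u ∈ U with u ≠ p}. -/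
open Metric Set

noncomputable section

/-!
The cell is a finite intersection of sets `{x | ‖x - p‖² - r² ≤ ‖x - u‖² - α²}`, and the interior
of a finite intersection is the intersection of the interiors. For `u ≠ p` the quadratic terms
cancel and the set is a closed half-space with normal `u - p`, whose interior is the open
half-space. For `u = p` the set is all of space, because `α ≤ r`.
-/

open scoped RealInnerProductSpace

section PowerHalfspace

variable {E : Type*} [NormedAddCommGroup E] [InnerProductSpace ℝ E]

theorem interior_setOf_inner_le {v : E} (hv : v ≠ 0) (c : ℝ) :
    interior {x : E | ⟪v, x⟫ ≤ c} = {x | ⟪v, x⟫ < c} := by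
  have hne : innerSL ℝ v ≠ 0 := by
    rwa [← norm_ne_zero_iff, innerSL_apply_norm, norm_ne_zero_iff]
  have hopen := (innerSL ℝ v).isOpenMap_of_ne_zero hne
  change interior (innerSL ℝ v ⁻¹' Iic c) = innerSL ℝ v ⁻¹' Iio c
  rw [← hopen.preimage_interior_eq_interior_preimage (innerSL ℝ v).continuous, interior_Iic]

theorem dist_sq_sub_dist_sq (x p u : E) :
    dist x p ^ 2 - dist x u ^ 2 = 2 * ⟪u - p, x⟫ + ‖p‖ ^ 2 - ‖u‖ ^ 2 := by
  rw [dist_eq_norm, dist_eq_norm, norm_sub_sq_real, norm_sub_sq_real, inner_sub_left,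
    real_inner_comm u, real_inner_comm p]
  ring

theorem interior_setOf_dist_sq_sub_le {p u : E} (hpu : u ≠ p) (a b : ℝ) :
    interior {x : E | dist x p ^ 2 - a ≤ dist x u ^ 2 - b} =
      {x | dist x p ^ 2 - a < dist x u ^ 2 - b} := by
  set c := (a - b + ‖u‖ ^ 2 - ‖p‖ ^ 2) / 2
  have hle : {x : E | dist x p ^ 2 - a ≤ dist x u ^ 2 - b} = {x | ⟪u - p, x⟫ ≤ c} := by
    ext x
    have := dist_sq_sub_dist_sq x p u
    simp only [mem_ofPred_eq, c]
    constructor <;> intro <;> linarith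
  have hlt : {x : E | dist x p ^ 2 - a < dist x u ^ 2 - b} = {x | ⟪u - p, x⟫ < c} := by
    ext x
    have := dist_sq_sub_dist_sq x p u
    simp only [mem_ofPred_eq, c]
    constructor <;> intro <;> linarith
  rw [hle, hlt, interior_setOf_inner_le (sub_ne_zero.mpr hpu)]

end PowerHalfspace

theorem stmt14_general {k : ℕ} (U : Finset (EuclideanSpace ℝ (Fin k)))
    (p : EuclideanSpace ℝ (Fin k)) (r : ℝ) (α : ℝ) (hα : 0 ≤ α)
    (hndp : p ∈ U → α < r) :
    interior (pcell U p r α) =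
      {x | ∀ u ∈ U, u ≠ p → dist x p ^ 2 - r ^ 2 < dist x u ^ 2 - α ^ 2} := by
  simp only [pcell, ofPred_forall, U.interior_iInter]
  ext x
  simp only [mem_iInter, mem_ofPred_eq]
  refine forall₂_congr fun u hu => ?_
  obtain rfl | hup := eq_or_ne u p
  · have hαr : α ^ 2 ≤ r ^ 2 := pow_le_pow_left₀ hα (hndp hu).le 2
    have hall : {x | dist x u ^ 2 - r ^ 2 ≤ dist x u ^ 2 - α ^ 2} = univ :=
      eq_univ_of_forall fun y => (by linarith : dist y u ^ 2 - r ^ 2 ≤ dist y u ^ 2 - α ^ 2)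
    simp only [hall, interior_univ, mem_univ, ne_eq, not_true_eq_false, IsEmpty.forall_iff]
  · simp only [interior_setOf_dist_sq_sub_le hup, mem_ofPred_eq, ne_eq, hup, not_false_eq_true,
      forall_const]

/-- Interior characterization of the power cell: assuming `p ∈ U → α < r`,
the interior of `P(α)` is exactly the set of points where all the defining inequalities
with `u ≠ p` are strict. -/
theorem stmt14 {k : ℕ} (U : Finset (EuclideanSpace ℝ (Fin k))) (hU : U.Nonempty)
    (p : EuclideanSpace ℝ (Fin k)) (r : ℝ) (hr : 0 < r) (α : ℝ) (hα : 0 ≤ α)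
    (hndp : p ∈ U → α < r) :
    interior (pcell U p r α) =
      {x | ∀ u ∈ U, u ≠ p → dist x p ^ 2 - r ^ 2 < dist x u ^ 2 - α ^ 2} :=
  stmt14_general U p r α hα hndp
end
end
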